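/- arXiv:2101.01428 — 4 statements merged into one kernel-verified Lean document; each statement's English description precedes it below -/
import Mathlib

section
/- Let 0 < λ ≤ Λ and let z : [0, ∞) → ℝ be a C² function with z(0) = 0, z ≤ 0, z' ≤ 0, satisfying -Λ z''(r) - λ z'(r)/r = e^{z(r)} for r ∈ (0, ∞). Then for all r > 0, 0 ≥ z'(r) ≥ -r/(λ + Λ), and consequently z'(r) → 0 as r → 0⁺. -/
open Real Filter Set Topology

/-!
Solving the equation for `z'` gives `z' r = r (-e^{z r} - Λ z'' r) / λ`, so `z' 0 = 0` and hence
`z' → 0` at `0⁺`. The line `r ↦ -r/(λ+Λ)` is a lower barrier for `z'`: wherever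
`z' r < -r/(λ+Λ)`, the equation together with `e^z ≤ 1` forces `z'' r > -1/(λ+Λ)`, so `z'`,
which starts at `0`, can never cross the line from above.
-/

theorem mul_le_of_lt_deriv_of_lt_mul {f : ℝ → ℝ} (hf : Differentiable ℝ f) {k : ℝ}
    (h0 : 0 ≤ f 0) (hbarrier : ∀ x, 0 < x → f x < k * x → k < deriv f x)
    {r : ℝ} (hr : 0 ≤ r) : k * r ≤ f r := by
  -- Lowering the line by `ε` makes it touch `f` only at points `x > 0`.
  refine le_of_forall_pos_le_add fun ε hε => ?_
  have hfence := image_le_of_deriv_right_lt_deriv_boundary (a := 0) (b := r)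
    (f := fun x => k * x - ε) (f' := fun _ => k) (B' := deriv f) (by fun_prop)
    (fun x _ => (((hasDerivAt_id x).const_mul k).sub_const ε).hasDerivWithinAt.congr_deriv
      (mul_one k))
    (by linarith [mul_zero k]) (fun x => (hf x).hasDerivAt) ?_ ⟨hr, le_rfl⟩
  · linarith
  rintro x ⟨hx0, -⟩ hx
  rcases hx0.eq_or_lt with rfl | hxpos
  · linarith [mul_zero k]
  · exact hbarrier x hxpos (by linarith)

section RadialODE

variable {lam Lam : ℝ} {z : ℝ → ℝ}

theorem deriv_zero_of_radial_ode (hlam : lam ≠ 0) (hz : ContDiff ℝ 2 z)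
    (hODE : ∀ r, 0 < r → -Lam * deriv (deriv z) r - lam * deriv z r / r = exp (z r)) :
    deriv z 0 = 0 := by
  set g : ℝ → ℝ := fun r => r * (-exp (z r) - Lam * deriv (deriv z) r) / lam
  have hg : Continuous g := by
    have := hz.continuous
    have := (hz.deriv' (n := 1)).continuous_deriv le_rfl
    fun_prop
  have hzg : g =ᶠ[𝓝[>] 0] deriv z := eventually_nhdsWithin_of_forall fun r (hr : 0 < r) => by
    have := hODE r hr
    simp only [g]
    field_simp at this ⊢
    linarith
  refine tendsto_nhds_unique ((hz.continuous_deriv one_le_two).tendsto 0 |>.mono_left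
    (nhdsWithin_le_nhds (s := Ioi 0))) ?_
  simpa [g] using ((hg.tendsto 0).mono_left nhdsWithin_le_nhds).congr' hzg

theorem neg_inv_lt_deriv_deriv_of_radial_ode (hlam : 0 < lam) (hLam : 0 < Lam) {r : ℝ}
    (hr : 0 < r) (hzr : z r ≤ 0)
    (hODE : -Lam * deriv (deriv z) r - lam * deriv z r / r = exp (z r))
    (hlt : deriv z r < -(lam + Lam)⁻¹ * r) : -(lam + Lam)⁻¹ < deriv (deriv z) r := by
  have hdrift : lam * deriv z r / r < -(lam / (lam + Lam)) := by
    rw [div_lt_iff₀ hr]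
    calc lam * deriv z r < lam * (-(lam + Lam)⁻¹ * r) := by gcongr
      _ = -(lam / (lam + Lam)) * r := by ring
  have hsplit : lam / (lam + Lam) - 1 = Lam * -(lam + Lam)⁻¹ := by
    field_simp [(add_pos hlam hLam).ne']
    ring
  have : Lam * -(lam + Lam)⁻¹ < Lam * deriv (deriv z) r := by
    linarith [exp_le_one_iff.mpr hzr]
  exact lt_of_mul_lt_mul_left this hLam.le

end RadialODE

theorem stmt3_general (lam Lam : ℝ) (hlam : 0 < lam) (hll : lam ≤ Lam)
    (z : ℝ → ℝ) (hC2 : ContDiff ℝ 2 z)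
    (hneg : ∀ r, 0 ≤ r → z r ≤ 0)
    (hdec : ∀ r, 0 < r → deriv z r ≤ 0)
    (hODE : ∀ r, 0 < r →
      -Lam * deriv (deriv z) r - lam * deriv z r / r = Real.exp (z r)) :
    (∀ r, 0 < r → deriv z r ≤ 0 ∧ -r / (lam + Lam) ≤ deriv z r) ∧
    Filter.Tendsto (deriv z) (nhdsWithin 0 (Set.Ioi 0)) (nhds 0) := by
  have hLam : 0 < Lam := hlam.trans_le hll
  have hz'0 : deriv z 0 = 0 := deriv_zero_of_radial_ode hlam.ne' hC2 hODE
  refine ⟨fun r hr => ⟨hdec r hr, ?_⟩, ?_⟩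
  · have := mul_le_of_lt_deriv_of_lt_mul hC2.differentiable_deriv_two hz'0.ge (fun x hx =>
      neg_inv_lt_deriv_deriv_of_radial_ode hlam hLam hx (hneg x hx.le) (hODE x hx)) hr.le
    rwa [neg_mul, ← div_eq_inv_mul, ← neg_div] at this
  · simpa [hz'0] using (hC2.continuous_deriv one_le_two).tendsto 0 |>.mono_left
      nhdsWithin_le_nhds

theorem stmt3 (lam Lam : ℝ) (hlam : 0 < lam) (hll : lam ≤ Lam)
    (z : ℝ → ℝ) (hC2 : ContDiff ℝ 2 z) (hz0 : z 0 = 0)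
    (hneg : ∀ r, 0 ≤ r → z r ≤ 0)
    (hdec : ∀ r, 0 < r → deriv z r ≤ 0)
    (hreg : Filter.Tendsto (fun r : ℝ => r ^ (lam / Lam) * deriv z r)
      (nhdsWithin 0 (Set.Ioi 0)) (nhds 0))
    (hODE : ∀ r, 0 < r →
      -Lam * deriv (deriv z) r - lam * deriv z r / r = Real.exp (z r)) :
    (∀ r, 0 < r → deriv z r ≤ 0 ∧ -r / (lam + Lam) ≤ deriv z r) ∧
    Filter.Tendsto (deriv z) (nhdsWithin 0 (Set.Ioi 0)) (nhds 0) :=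
  stmt3_general lam Lam hlam hll z hC2 hneg hdec hODE
end

section
/- Let p > Ñ₋/(Ñ₋-2) with Ñ₋ > 2. The planar vector field F(X,Z) given by F = (X(X + Z/Λ), Z(2 - pX - Z/Λ)) for Z > Λ and F = (X(X - (Ñ₋-2) + Z/λ), Z(Ñ₋ - pX - Z/λ)) for 0 < Z < Λ has exactly the stationary points N₀ = (0, 2Λ), A₀ = (Ñ₋-2, 0), M₀ = (2/(p-1), λ(Ñ₋-2-2/(p-1))), and O = (0,0) in the closed first quadrant (where the formula applies), with M₀ lying in the open region 0 < Z < Λ. -/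
/-!
Each branch of `F` multiplies the two coordinates by affine factors, so its zeros come from
choosing, coordinate by coordinate, which factor vanishes. Above `Z = Λ` the factor `X + Z/Λ` is
positive in the quadrant, leaving only `(0, 2Λ)`. Below it the four zeros are `O`, `A₀`, `M₀` and
`(0, λÑ₋) = (0, Λ + λ)`, and the last one lies above `Z = Λ`. Finally `p > Ñ₋/(Ñ₋-2)` says
`(p-1)(Ñ₋-2) > 2`, i.e. `2/(p-1) < Ñ₋-2`, which puts `M₀` strictly between `Z = 0` and `Z = Λ`.
-/

noncomputable def upperField (Lam p : ℝ) (q : ℝ × ℝ) : ℝ × ℝ :=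
  (q.1 * (q.1 + q.2 / Lam), q.2 * (2 - p * q.1 - q.2 / Lam))

noncomputable def lowerField (lam Nt p : ℝ) (q : ℝ × ℝ) : ℝ × ℝ :=
  (q.1 * (q.1 - (Nt - 2) + q.2 / lam), q.2 * (Nt - p * q.1 - q.2 / lam))

theorem upperField_eq_zero_iff {Lam p : ℝ} {q : ℝ × ℝ} (hLam : 0 < Lam) (hx : 0 ≤ q.1)
    (hz : 0 < q.2) : upperField Lam p q = 0 ↔ q = (0, 2 * Lam) := by
  obtain ⟨x, z⟩ := q
  simp only [upperField, Prod.mk_eq_zero, Prod.mk.injEq, mul_eq_zero, hz.ne', false_or] at hx hz ⊢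
  have hzL : 0 < z / Lam := div_pos hz hLam
  constructor
  · rintro ⟨rfl | hx', hz'⟩
    · refine ⟨rfl, ?_⟩
      field_simp at hz'
      linarith
    · linarith
  · rintro ⟨rfl, rfl⟩
    refine ⟨Or.inl rfl, ?_⟩
    field_simp
    ring

theorem setOf_upperField_eq_zero {Lam p : ℝ} (hLam : 0 < Lam) :
    {q : ℝ × ℝ | Lam < q.2 ∧ 0 ≤ q.1 ∧ upperField Lam p q = 0} = {(0, 2 * Lam)} := by
  ext q
  simp only [Set.mem_ofPred_eq, Set.mem_singleton_iff]
  constructor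
  · rintro ⟨hz, hx, h⟩
    exact (upperField_eq_zero_iff hLam hx (hLam.trans hz)).1 h
  · rintro rfl
    have hz : Lam < 2 * Lam := by linarith
    exact ⟨hz, le_rfl, (upperField_eq_zero_iff hLam le_rfl (hLam.trans hz)).2 rfl⟩

theorem lowerField_eq_zero_iff {lam Nt p : ℝ} {q : ℝ × ℝ} (hlam : lam ≠ 0) (hp : p ≠ 1) :
    lowerField lam Nt p q = 0 ↔
      q = (0, 0) ∨ q = (Nt - 2, 0) ∨ q = (0, lam * Nt) ∨
        q = (2 / (p - 1), lam * (Nt - 2 - 2 / (p - 1))) := by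
  have hp' : p - 1 ≠ 0 := sub_ne_zero.mpr hp
  obtain ⟨x, z⟩ := q
  simp only [lowerField, Prod.mk_eq_zero, Prod.mk.injEq, mul_eq_zero]
  constructor
  · rintro ⟨rfl | hx, rfl | hz⟩
    · exact Or.inl ⟨rfl, rfl⟩
    · refine Or.inr (Or.inr (Or.inl ⟨rfl, ?_⟩))
      field_simp at hz
      linarith
    · exact Or.inr (Or.inl ⟨by linarith [zero_div lam], rfl⟩)
    · have hx' : x = 2 / (p - 1) := by
        field_simp
        linear_combination -hx - hz
      refine Or.inr (Or.inr (Or.inr ⟨hx', ?_⟩))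
      rw [← hx']
      field_simp at hx
      linear_combination hx
  · rintro (⟨rfl, rfl⟩ | ⟨rfl, rfl⟩ | ⟨rfl, rfl⟩ | ⟨rfl, rfl⟩)
    · simp
    · simp
    · exact ⟨Or.inl rfl, Or.inr (by field_simp; ring)⟩
    · constructor <;> right <;> field_simp <;> ring

theorem setOf_lowerField_eq_zero {lam Lam Nt p : ℝ} (hlam : lam ≠ 0) (hp : 1 < p)
    (hLam : 0 ≤ Lam) (hNt : Lam < lam * Nt) (hA : 2 ≤ Nt)
    (hM₀ : 0 ≤ lam * (Nt - 2 - 2 / (p - 1))) (hM₁ : lam * (Nt - 2 - 2 / (p - 1)) ≤ Lam) :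
    {q : ℝ × ℝ | q.2 ≤ Lam ∧ 0 ≤ q.1 ∧ 0 ≤ q.2 ∧ lowerField lam Nt p q = 0} =
      {(Nt - 2, 0), (2 / (p - 1), lam * (Nt - 2 - 2 / (p - 1))), (0, 0)} := by
  have hx : 0 ≤ 2 / (p - 1) := div_nonneg zero_le_two (sub_nonneg.2 hp.le)
  ext q
  simp only [Set.mem_ofPred_eq, Set.mem_insert_iff, Set.mem_singleton_iff,
    lowerField_eq_zero_iff hlam hp.ne']
  constructor
  · rintro ⟨hz, -, -, rfl | rfl | rfl | rfl⟩
    · exact Or.inr (Or.inr rfl)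
    · exact Or.inl rfl
    · exact absurd hz (not_le.2 hNt)
    · exact Or.inr (Or.inl rfl)
  · rintro (rfl | rfl | rfl)
    · exact ⟨hLam, sub_nonneg.2 hA, le_rfl, Or.inr (Or.inl rfl)⟩
    · exact ⟨hM₁, hx, hM₀, Or.inr (Or.inr (Or.inr rfl))⟩
    · exact ⟨hLam, le_rfl, le_rfl, Or.inl rfl⟩

theorem setOf_zero_eq_union_of_piecewise {lam Lam Nt p : ℝ} (hLam : 0 ≤ Lam) {F : ℝ × ℝ → ℝ × ℝ}
    (hF : ∀ q, F q = if Lam < q.2 then upperField Lam p q else lowerField lam Nt p q) :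
    {q : ℝ × ℝ | 0 ≤ q.1 ∧ 0 ≤ q.2 ∧ F q = 0} =
      {q | Lam < q.2 ∧ 0 ≤ q.1 ∧ upperField Lam p q = 0} ∪
        {q | q.2 ≤ Lam ∧ 0 ≤ q.1 ∧ 0 ≤ q.2 ∧ lowerField lam Nt p q = 0} := by
  ext q
  by_cases hz : Lam < q.2
  · have hz₀ : 0 ≤ q.2 := hLam.trans hz.le
    simp [hF, hz, hz₀]
  · simp [hF, hz, not_lt.1 hz]

theorem mul_eq_add_of_eq_div_add_one {lam Lam Nt : ℝ} (hlam : lam ≠ 0)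
    (hNt : Nt = Lam / lam + 1) : lam * Nt = Lam + lam := by
  rw [hNt]
  field_simp

theorem one_lt_of_div_sub_two_lt {Nt p : ℝ} (hNt : 2 < Nt) (hp : Nt / (Nt - 2) < p) : 1 < p :=
  ((one_lt_div (by linarith)).2 (by linarith)).trans hp

theorem two_div_sub_one_lt_sub_two {Nt p : ℝ} (hNt : 2 < Nt) (hp : Nt / (Nt - 2) < p) :
    2 / (p - 1) < Nt - 2 := by
  have hp₁ : 0 < p - 1 := sub_pos.2 (one_lt_of_div_sub_two_lt hNt hp)
  have hNp : Nt < p * (Nt - 2) := (div_lt_iff₀ (by linarith)).1 hp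
  rw [div_lt_iff₀ hp₁]
  linarith

theorem stmt14 (lam Lam Nt p : ℝ) (hlam : 0 < lam) (hll : lam < Lam)
    (hNt : Nt = Lam / lam + 1) (hp : Nt / (Nt - 2) < p)
    (F : ℝ × ℝ → ℝ × ℝ)
    (hF : ∀ q : ℝ × ℝ, F q = if Lam < q.2
      then (q.1 * (q.1 + q.2 / Lam), q.2 * (2 - p * q.1 - q.2 / Lam))
      else (q.1 * (q.1 - (Nt - 2) + q.2 / lam),
            q.2 * (Nt - p * q.1 - q.2 / lam))) :
    {q : ℝ × ℝ | 0 ≤ q.1 ∧ 0 ≤ q.2 ∧ F q = 0} =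
      {((0 : ℝ), 2 * Lam), (Nt - 2, 0),
        (2 / (p - 1), lam * (Nt - 2 - 2 / (p - 1))), (0, 0)} ∧
    0 < lam * (Nt - 2 - 2 / (p - 1)) ∧
    lam * (Nt - 2 - 2 / (p - 1)) < Lam := by
  have hLam : 0 < Lam := hlam.trans hll
  have hlamNt : lam * Nt = Lam + lam := mul_eq_add_of_eq_div_add_one hlam.ne' hNt
  have hNt₂ : 2 < Nt := by nlinarith
  have hp₁ : 1 < p := one_lt_of_div_sub_two_lt hNt₂ hp
  have hx : 0 < 2 / (p - 1) := div_pos two_pos (sub_pos.2 hp₁)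
  have hM₀ : 0 < lam * (Nt - 2 - 2 / (p - 1)) :=
    mul_pos hlam (sub_pos.2 (two_div_sub_one_lt_sub_two hNt₂ hp))
  have hM₁ : lam * (Nt - 2 - 2 / (p - 1)) < Lam := by nlinarith
  refine ⟨?_, hM₀, hM₁⟩
  rw [setOf_zero_eq_union_of_piecewise hLam.le hF, setOf_upperField_eq_zero hLam,
    setOf_lowerField_eq_zero hlam.ne' hp₁ hLam.le (by linarith) hNt₂.le hM₀.le hM₁.le,
    ← Set.insert_eq]
end

section
/- Let Ñ₋ > 2, λ > 0, p > Ñ₋/(Ñ₋-2), and consider the linearization of the vector field F⁻(X,Z) = (X(X - (Ñ₋-2) + Z/λ), Z(Ñ₋ - pX - Z/λ)) at M₀ = (2/(p-1), λ(Ñ₋-2-2/(p-1))). Then the trace of the Jacobian DF⁻(M₀) is positive if p < (Ñ₋+2)/(Ñ₋-2), zero if p = (Ñ₋+2)/(Ñ₋-2), and negative if p > (Ñ₋+2)/(Ñ₋-2), while the determinant of DF⁻(M₀) is positive in all three cases. -/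
theorem stmt15 (lam Nt p : ℝ) (hlam : 0 < lam) (hNt : 2 < Nt)
    (hp : Nt / (Nt - 2) < p)
    (X0 Z0 a b c d : ℝ)
    (hX0 : X0 = 2 / (p - 1)) (hZ0 : Z0 = lam * (Nt - 2 - 2 / (p - 1)))
    (ha : a = deriv (fun X : ℝ => X * (X - (Nt - 2) + Z0 / lam)) X0)
    (hb : b = deriv (fun Z : ℝ => X0 * (X0 - (Nt - 2) + Z / lam)) Z0)
    (hc : c = deriv (fun X : ℝ => Z0 * (Nt - p * X - Z0 / lam)) X0)
    (hd : d = deriv (fun Z : ℝ => Z * (Nt - p * X0 - Z / lam)) Z0) :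
    (p < (Nt + 2) / (Nt - 2) → 0 < a + d) ∧
    (p = (Nt + 2) / (Nt - 2) → a + d = 0) ∧
    ((Nt + 2) / (Nt - 2) < p → a + d < 0) ∧
    0 < a * d - b * c := by
  have hNt2 : (0:ℝ) < Nt - 2 := by linarith
  have hp1 : 1 < p := by
    have h1 : (1:ℝ) < Nt / (Nt - 2) := by
      rw [lt_div_iff₀ hNt2]; linarith
    linarith
  have hp1' : (0:ℝ) < p - 1 := by linarith
  -- compute derivatives
  have hA : HasDerivAt (fun X : ℝ => X * (X - (Nt - 2) + Z0 / lam))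
      (1 * (X0 - (Nt - 2) + Z0 / lam) + X0 * 1) X0 :=
    (hasDerivAt_id X0).mul (((hasDerivAt_id X0).sub_const (Nt - 2)).add_const (Z0 / lam))
  have hB : HasDerivAt (fun Z : ℝ => X0 * (X0 - (Nt - 2) + Z / lam))
      (X0 * (1 / lam)) Z0 :=
    ((((hasDerivAt_id Z0).div_const lam)).const_add (X0 - (Nt - 2))).const_mul X0
  have hC : HasDerivAt (fun X : ℝ => Z0 * (Nt - p * X - Z0 / lam))
      (Z0 * (0 - p * 1 - 0)) X0 := by
    have : HasDerivAt (fun X : ℝ => Nt - p * X - Z0 / lam) (0 - p * 1 - 0) X0 :=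
      ((hasDerivAt_const X0 Nt).sub ((hasDerivAt_id X0).const_mul p)).sub
        (hasDerivAt_const X0 (Z0 / lam))
    exact this.const_mul Z0
  have hD : HasDerivAt (fun Z : ℝ => Z * (Nt - p * X0 - Z / lam))
      (1 * (Nt - p * X0 - Z0 / lam) + Z0 * (0 - 1 / lam)) Z0 := by
    have h1 : HasDerivAt (fun Z : ℝ => Nt - p * X0 - Z / lam) (0 - 1 / lam) Z0 :=
      (hasDerivAt_const Z0 (Nt - p * X0)).sub ((hasDerivAt_id Z0).div_const lam)
    have h2 : HasDerivAt (fun Z : ℝ => (Nt - p * X0) - Z / lam) (0 - 1 / lam) Z0 := h1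
    exact (hasDerivAt_id Z0).mul h1
  rw [hA.deriv] at ha
  rw [hB.deriv] at hb
  rw [hC.deriv] at hc
  rw [hD.deriv] at hd
  have hlam' : lam ≠ 0 := ne_of_gt hlam
  have hZ : Z0 / lam = Nt - 2 - 2 / (p - 1) := by
    rw [hZ0]; field_simp
  have hXpos : 0 < X0 := by
    rw [hX0]; positivity
  have ha' : a = 2 / (p - 1) := by
    rw [ha, hZ, hX0]; ring
  have hd' : d = Nt - p * (2 / (p - 1)) - 2 * (Nt - 2 - 2 / (p - 1)) := by
    rw [hd, hZ, hX0, hZ0]; field_simp; ring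
  have had : a + d = ((Nt + 2) - (Nt - 2) * p) / (p - 1) := by
    rw [ha', hd']; field_simp; ring
  refine ⟨?_, ?_, ?_, ?_⟩
  · intro h
    rw [had]
    apply div_pos _ hp1'
    rw [lt_div_iff₀ hNt2] at h
    nlinarith
  · intro h
    rw [had]
    rw [eq_div_iff (ne_of_gt hNt2)] at h
    have : (Nt + 2) - (Nt - 2) * p = 0 := by nlinarith
    rw [this, zero_div]
  · intro h
    rw [had]
    apply div_neg_of_neg_of_pos _ hp1'
    rw [div_lt_iff₀ hNt2] at h
    nlinarith
  · -- determinant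
    have hdet : a * d - b * c = X0 * ((Nt - 2) * p - Nt) := by
      rw [ha', hd', hb, hc, hZ0, hX0]
      field_simp
      ring
    rw [hdet]
    apply mul_pos hXpos
    rw [div_lt_iff₀ hNt2] at hp
    nlinarith
end

section
/- Let p > 1, R > 0, and let λ₁ = λ₁(M⁺_{λ,Λ}, B_R) > 0 be the principal eigenvalue of M⁺_{λ,Λ} in B_R (characterized by the existence of a positive eigenfunction and the maximum principle below it). Suppose u : B_R → ℝ is a positive C² function with u = 0 on ∂B_R satisfying -M⁺_{λ,Λ}(D²u) = u^p. Then (sup_{B_R} u)^{p-1} ≥ λ₁(M⁺_{λ,Λ}, B_R). In particular, if u_p denotes the solution with u_p(0) = max u_p, then p · u_p(0)^{p-1} → ∞ as p → ∞. -/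
open Real Metric Filter

noncomputable def hessMat (u : EuclideanSpace ℝ (Fin 2) → ℝ)
    (x : EuclideanSpace ℝ (Fin 2)) : Matrix (Fin 2) (Fin 2) ℝ :=
  Matrix.of fun i j =>
    fderiv ℝ (fun y => fderiv ℝ u y (EuclideanSpace.single j 1)) x
      (EuclideanSpace.single i 1)

/-- Pucci maximal operator: supremum of `tr (A M)` over symmetric matrices
`A` with `lam • 1 ≤ A ≤ Lam • 1`. -/
noncomputable def pucciPlus (lam Lam : ℝ) (M : Matrix (Fin 2) (Fin 2) ℝ) : ℝ :=
  sSup {t : ℝ | ∃ A : Matrix (Fin 2) (Fin 2) ℝ,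
    (A - lam • (1 : Matrix (Fin 2) (Fin 2) ℝ)).PosSemidef ∧
    ((Lam • (1 : Matrix (Fin 2) (Fin 2) ℝ)) - A).PosSemidef ∧
    t = (A * M).trace}

lemma key16 (lam Lam lam1 R p : ℝ)
    (hR : 0 < R) (hp : 1 < p)
    (hMP : ∀ (v : EuclideanSpace ℝ (Fin 2) → ℝ) (μ : ℝ), 0 ≤ μ → μ < lam1 →
      ContDiffOn ℝ 2 v (closedBall 0 R) →
      (∀ x ∈ ball (0 : EuclideanSpace ℝ (Fin 2)) R,
        -pucciPlus lam Lam (hessMat v x) ≤ μ * v x) →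
      (∀ x ∈ sphere (0 : EuclideanSpace ℝ (Fin 2)) R, v x ≤ 0) →
      ∀ x ∈ ball (0 : EuclideanSpace ℝ (Fin 2)) R, v x ≤ 0)
    (u : EuclideanSpace ℝ (Fin 2) → ℝ)
    (hu : ContDiffOn ℝ 2 u (closedBall 0 R))
    (hupos : ∀ x ∈ ball (0 : EuclideanSpace ℝ (Fin 2)) R, 0 < u x)
    (hub : ∀ x ∈ sphere (0 : EuclideanSpace ℝ (Fin 2)) R, u x = 0)
    (heq : ∀ x ∈ ball (0 : EuclideanSpace ℝ (Fin 2)) R,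
      -pucciPlus lam Lam (hessMat u x) = u x ^ p)
    (M : ℝ) (hM : IsLUB (u '' closedBall 0 R) M) :
    lam1 ≤ M ^ (p - 1) := by
  have h0ball : (0 : EuclideanSpace ℝ (Fin 2)) ∈ ball (0 : EuclideanSpace ℝ (Fin 2)) R := by
    simpa using hR
  have hu0 : 0 < u 0 := hupos 0 h0ball
  have hMge : u 0 ≤ M := hM.1 ⟨0, by simpa using hR.le, rfl⟩
  have hMpos : 0 < M := lt_of_lt_of_le hu0 hMge
  by_contra h
  push_neg at h
  have hμ0 : 0 ≤ M ^ (p - 1) := Real.rpow_nonneg hMpos.le _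
  have := hMP u (M ^ (p - 1)) hμ0 h hu ?_ (fun x hx => (hub x hx).le) 0 h0ball
  · exact absurd this (not_le.2 hu0)
  · intro x hx
    rw [heq x hx]
    have hux := hupos x hx
    have huxM : u x ≤ M := hM.1 ⟨x, ball_subset_closedBall hx, rfl⟩
    have : u x ^ p = u x ^ (p - 1) * u x := by
      rw [← Real.rpow_add_one hux.ne' (p - 1)]; ring_nf
    rw [this]
    exact mul_le_mul_of_nonneg_right
      (Real.rpow_le_rpow hux.le huxM (by linarith)) hux.le

theorem stmt16 (lam Lam lam1 R p : ℝ) (hlam : 0 < lam) (hll : lam ≤ Lam)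
    (hR : 0 < R) (hl1 : 0 < lam1) (hp : 1 < p)
    (hMP : ∀ (v : EuclideanSpace ℝ (Fin 2) → ℝ) (μ : ℝ), 0 ≤ μ → μ < lam1 →
      ContDiffOn ℝ 2 v (closedBall 0 R) →
      (∀ x ∈ ball (0 : EuclideanSpace ℝ (Fin 2)) R,
        -pucciPlus lam Lam (hessMat v x) ≤ μ * v x) →
      (∀ x ∈ sphere (0 : EuclideanSpace ℝ (Fin 2)) R, v x ≤ 0) →
      ∀ x ∈ ball (0 : EuclideanSpace ℝ (Fin 2)) R, v x ≤ 0)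
    (u : EuclideanSpace ℝ (Fin 2) → ℝ)
    (hu : ContDiffOn ℝ 2 u (closedBall 0 R))
    (hupos : ∀ x ∈ ball (0 : EuclideanSpace ℝ (Fin 2)) R, 0 < u x)
    (hub : ∀ x ∈ sphere (0 : EuclideanSpace ℝ (Fin 2)) R, u x = 0)
    (heq : ∀ x ∈ ball (0 : EuclideanSpace ℝ (Fin 2)) R,
      -pucciPlus lam Lam (hessMat u x) = u x ^ p)
    (M : ℝ) (hM : IsLUB (u '' closedBall 0 R) M) :
    lam1 ≤ M ^ (p - 1) ∧
    ∀ U : ℝ → EuclideanSpace ℝ (Fin 2) → ℝ,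
      (∀ q, 1 < q →
        ContDiffOn ℝ 2 (U q) (closedBall 0 R) ∧
        (∀ x ∈ ball (0 : EuclideanSpace ℝ (Fin 2)) R, 0 < U q x) ∧
        (∀ x ∈ sphere (0 : EuclideanSpace ℝ (Fin 2)) R, U q x = 0) ∧
        (∀ x ∈ ball (0 : EuclideanSpace ℝ (Fin 2)) R,
          -pucciPlus lam Lam (hessMat (U q) x) = U q x ^ q) ∧
        (∀ x ∈ closedBall (0 : EuclideanSpace ℝ (Fin 2)) R, U q x ≤ U q 0)) →
      Tendsto (fun q => q * U q 0 ^ (q - 1)) atTop atTop := by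
  refine ⟨key16 lam Lam lam1 R p hR hp hMP u hu hupos hub heq M hM, ?_⟩
  intro U hU
  have hbase : Tendsto (fun q : ℝ => lam1 * q) atTop atTop :=
    Tendsto.const_mul_atTop hl1 tendsto_id
  refine tendsto_atTop_mono' atTop ?_ hbase
  filter_upwards [eventually_gt_atTop (1 : ℝ)] with q hq
  obtain ⟨h1, h2, h3, h4, h5⟩ := hU q hq
  have hlub : IsLUB (U q '' closedBall 0 R) (U q 0) := by
    refine IsGreatest.isLUB ⟨⟨0, by simpa using hR.le, rfl⟩, ?_⟩
    rintro y ⟨x, hx, rfl⟩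
    exact h5 x hx
  have hkey : lam1 ≤ U q 0 ^ (q - 1) :=
    key16 lam Lam lam1 R q hR hq hMP (U q) h1 h2 h3 h4 (U q 0) hlub
  calc lam1 * q ≤ U q 0 ^ (q - 1) * q :=
        mul_le_mul_of_nonneg_right hkey (by linarith)
    _ = q * U q 0 ^ (q - 1) := mul_comm _ _
end
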